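/- With notation as in the canonical simplex decomposition (V a real vector space, v_1,…,v_d linearly independent, σ^i = S(v_1,…,v_i), τ^{d−i} = S(v_{i+1},…,v_d), a, b > 0): if φ is a translation-invariant valuation on convex bodies in V with values in an abelian group (meaning φ(B ∪ C) = φ(B) + φ(C) − φ(B ∩ C) whenever B, C, B ∪ C are convex bodies, and φ(X + w) = φ(X) for all w ∈ V), then φ((a+b)σ^d) = Σ_{i=0}^d φ(a σ^i + b τ^{d−i}) − Σ_{i=1}^d φ(a σ^{i−1} + b τ^{d−i}). -/

import Mathlib

open scoped Pointwise

/-- `simplexS w` is the simplex `S(w_1, …, w_k) =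
{ x_1 w_1 + ⋯ + x_k w_k : 1 ≥ x_1 ≥ ⋯ ≥ x_k ≥ 0 }`. -/
def simplexS {V : Type*} [AddCommGroup V] [Module ℝ V] {k : ℕ} (w : Fin k → V) : Set V :=
  {y | ∃ x : Fin k → ℝ, (∀ i, 0 ≤ x i) ∧ (∀ i, x i ≤ 1) ∧
    (∀ i j : Fin k, i ≤ j → x j ≤ x i) ∧ y = ∑ i, x i • w i}

/-!
In the coordinates `x ↦ ∑ x_j v_j`, the body `(a + b) S(v_1, …, v_d)` is the set of antitone
`x ∈ [0, a + b]^d`. The hyperplanes `x_j = b` cut it into the pieces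
`C_i = {x_j ≥ b for j < i, x_j ≤ b for j ≥ i}`, each a translate of `a σ^i + b τ^{d-i}`.
Adding the pieces one at a time, `U_k = {x_j ≤ b for j ≥ k}` satisfies
`U_{k+1} = U_k ∪ C_{k+1}` with `U_k ∩ C_{k+1}` a translate of `a σ^k + b τ^{d-k-1}`
(the coordinate `x_k` is pinned to `b`), so inclusion–exclusion telescopes to the formula.
With `slab d a b i k` the part of the body where `x_j ≥ b` for `j < i` and `x_j ≤ b` for `j ≥ k`,
`C_i = slab d a b i i`, `U_k = slab d a b 0 k` and `U_k ∩ C_{k+1} = slab d a b (k + 1) k`.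
-/

namespace CanonicalSimplex

open Set

def blockSimplex {ι : Type*} [Preorder ι] (I : Set ι) (c : ℝ) : Set (ι → ℝ) :=
  {x | (∀ j, x j ∈ Icc 0 c) ∧ (∀ j ∉ I, x j = 0) ∧ AntitoneOn x I}

theorem smul_blockSimplex_one {ι : Type*} [Preorder ι] {I : Set ι} {c : ℝ} (hc : 0 < c) :
    c • blockSimplex I 1 = blockSimplex I c := by
  ext x
  rw [mem_smul_set_iff_inv_smul_mem₀ hc.ne']
  simp only [blockSimplex, mem_ofPred_eq, mem_Icc, Pi.smul_apply, smul_eq_mul, AntitoneOn]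
  have h₀ : ∀ j, 0 ≤ c⁻¹ * x j ↔ 0 ≤ x j := fun j =>
    mul_nonneg_iff_of_pos_left (inv_pos.2 hc)
  have h₁ : ∀ j, c⁻¹ * x j ≤ 1 ↔ x j ≤ c := fun j => by
    rw [inv_mul_le_iff₀ hc, mul_one]
  have hle : ∀ j j', c⁻¹ * x j ≤ c⁻¹ * x j' ↔ x j ≤ x j' := fun j j' =>
    mul_le_mul_iff_of_pos_left (inv_pos.2 hc)
  simp only [h₀, h₁, hle, mul_eq_zero, inv_eq_zero, hc.ne', false_or]

variable {d : ℕ} {a b : ℝ} {i k : ℕ}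

def slab (d : ℕ) (a b : ℝ) (i k : ℕ) : Set (Fin d → ℝ) :=
  {x | Antitone x ∧ (∀ j, x j ∈ Icc 0 (a + b)) ∧ (∀ j : Fin d, ↑j < i → b ≤ x j) ∧
    ∀ j : Fin d, k ≤ ↑j → x j ≤ b}

theorem convex_slab : Convex ℝ (slab d a b i k) := by
  rintro x ⟨hx, hx₀, hxi, hxk⟩ y ⟨hy, hy₀, hyi, hyk⟩ s t hs ht hst
  exact ⟨(hx.const_smul hs).add (hy.const_smul ht),
    fun j => convex_Icc _ _ (hx₀ j) (hy₀ j) hs ht hst,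
    fun j hj => convex_Ici b (hxi j hj) (hyi j hj) hs ht hst,
    fun j hj => convex_Iic b (hxk j hj) (hyk j hj) hs ht hst⟩

theorem isClosed_slab : IsClosed (slab d a b i k) := by
  simp only [slab, ofPred_and, ofPred_forall]
  exact isClosed_antitone.inter <|
    (isClosed_iInter fun j => isClosed_Icc.preimage (continuous_apply j)).inter <|
    (isClosed_iInter fun j => isClosed_iInter fun _ =>
      isClosed_le continuous_const (continuous_apply j)).inter
    (isClosed_iInter fun j => isClosed_iInter fun _ =>
      isClosed_le (continuous_apply j) continuous_const)

theorem isCompact_slab : IsCompact (slab d a b i k) :=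
  (isCompact_univ_pi fun _ => isCompact_Icc).of_isClosed_subset isClosed_slab
    fun _ hx j _ => hx.2.1 j

theorem slab_nonempty (ha : 0 ≤ a) (hb : 0 ≤ b) : (slab d a b i k).Nonempty := by
  refine ⟨fun j => if ↑j < i then b else 0, ?_, ?_, ?_, ?_⟩ <;>
    simp only [Antitone, Fin.le_def, mem_Icc] <;> grind

theorem slab_zero_succ :
    slab d a b 0 (k + 1) = slab d a b 0 k ∪ slab d a b (k + 1) (k + 1) := by
  ext x
  constructor
  · rintro ⟨hx, hx₀, -, hxk⟩
    by_cases h : ∀ j : Fin d, k ≤ ↑j → x j ≤ b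
    · exact Or.inl ⟨hx, hx₀, fun j hj => absurd hj (Nat.not_lt_zero _), h⟩
    · push Not at h
      obtain ⟨j₀, hj₀, hbx⟩ := h
      exact Or.inr ⟨hx, hx₀, fun j hj => hbx.le.trans (hx (Fin.le_def.2 (by omega))), hxk⟩
  · rintro (⟨hx, hx₀, hxi, hxk⟩ | ⟨hx, hx₀, -, hxk⟩)
    · exact ⟨hx, hx₀, hxi, fun j hj => hxk j (by omega)⟩
    · exact ⟨hx, hx₀, fun j hj => absurd hj (Nat.not_lt_zero _), hxk⟩

theorem slab_zero_inter_slab_succ :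
    slab d a b 0 k ∩ slab d a b (k + 1) (k + 1) = slab d a b (k + 1) k := by
  ext x
  constructor
  · rintro ⟨⟨hx, hx₀, -, hxk⟩, ⟨-, -, hxi, -⟩⟩
    exact ⟨hx, hx₀, hxi, hxk⟩
  · rintro ⟨hx, hx₀, hxi, hxk⟩
    exact ⟨⟨hx, hx₀, fun j hj => absurd hj (Nat.not_lt_zero _), hxk⟩,
      ⟨hx, hx₀, hxi, fun j hj => hxk j (by omega)⟩⟩

theorem slab_zero_self : slab d a b 0 d = blockSimplex univ (a + b) := by
  ext x
  simp only [slab, blockSimplex, mem_ofPred_eq, antitoneOn_univ, mem_univ, not_true_eq_false]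
  grind

theorem slab_eq_add (ha : 0 ≤ a) (hb : 0 ≤ b) (hki : k ≤ i) :
    slab d a b i k =
      blockSimplex {j : Fin d | ↑j < k} a + blockSimplex {j : Fin d | i ≤ ↑j} b +
        {fun j : Fin d => if ↑j < i then b else 0} := by
  ext x
  simp only [add_singleton, image_add_right, mem_preimage, mem_add, blockSimplex, slab,
    mem_ofPred_eq, mem_Icc, Pi.add_apply, Pi.neg_apply, funext_iff, AntitoneOn, Antitone,
    Fin.le_def]
  constructor
  · intro hx
    refine ⟨fun j => if ↑j < k then x j - b else 0, ?_,
      fun j => if i ≤ ↑j then x j else 0, ?_, ?_⟩ <;> grind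
  · rintro ⟨y, hy, z, hz, hyz⟩
    refine ⟨?_, ?_, ?_, ?_⟩ <;> intros <;> grind

section Coordinates

variable {V : Type*} [AddCommGroup V] [Module ℝ V]

theorem simplexS_comp_eq_image {ι : Type*} [Fintype ι] [Preorder ι] {m : ℕ} (v : ι → V)
    {e : Fin m → ι} (he : StrictMono e) :
    simplexS (v ∘ e) = Fintype.linearCombination ℝ v '' blockSimplex (range e) 1 := by
  have hsum : ∀ X : ι → ℝ, (∀ j ∉ range e, X j = 0) →
      ∑ j, X j • v j = ∑ t, X (e t) • (v ∘ e) t := fun X hX =>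
    (Fintype.sum_of_injective e he.injective _ _ (fun j hj => by simp [hX j hj])
      fun _ => rfl).symm
  ext y
  simp only [simplexS, mem_image, Fintype.linearCombination_apply]
  constructor
  · rintro ⟨x, hx₀, hx₁, hx, rfl⟩
    have hext : ∀ t, Function.extend e x 0 (e t) = x t := he.injective.extend_apply x 0
    have hzero : ∀ j ∉ range e, Function.extend e x 0 j = 0 := fun j hj =>
      Function.extend_apply' _ _ _ hj
    refine ⟨Function.extend e x 0, ⟨fun j => ?_, hzero, ?_⟩, ?_⟩
    · by_cases hj : j ∈ range e
      · obtain ⟨t, rfl⟩ := hj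
        rw [hext]
        exact ⟨hx₀ t, hx₁ t⟩
      · rw [hzero j hj]
        exact ⟨le_rfl, zero_le_one⟩
    · rintro _ ⟨t, rfl⟩ _ ⟨t', rfl⟩ h
      rw [hext, hext]
      exact hx _ _ (he.le_iff_le.1 h)
    · rw [hsum _ hzero]
      simp only [hext]
  · rintro ⟨X, ⟨hX₁, hX₀, hX⟩, rfl⟩
    exact ⟨X ∘ e, fun t => (hX₁ _).1, fun t => (hX₁ _).2,
      fun t t' h => hX (mem_range_self _) (mem_range_self _) (he.monotone h), hsum X hX₀⟩

theorem simplexS_castLE_eq_image (v : Fin d → V) (hk : k ≤ d) :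
    simplexS (v ∘ Fin.castLE hk) =
      Fintype.linearCombination ℝ v '' blockSimplex {j : Fin d | ↑j < k} 1 := by
  rw [simplexS_comp_eq_image v (Fin.strictMono_castLE hk), Fin.range_castLE]

theorem simplexS_tail_eq_image (v : Fin d → V) (hi : i ≤ d) :
    simplexS (fun t : Fin (d - i) => v ⟨i + t, by omega⟩) =
      Fintype.linearCombination ℝ v '' blockSimplex {j : Fin d | i ≤ ↑j} 1 := by
  have hrange :
      range (fun t : Fin (d - i) => (⟨i + t, by omega⟩ : Fin d)) = {j : Fin d | i ≤ ↑j} := by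
    ext j
    refine ⟨?_, fun (hj : i ≤ ↑j) => ⟨⟨j - i, by omega⟩, Fin.ext (Nat.add_sub_cancel' hj)⟩⟩
    rintro ⟨t, rfl⟩
    exact Nat.le_add_right i t
  rw [← hrange]
  exact simplexS_comp_eq_image v fun t t' h => Fin.mk_lt_mk.2 (by simpa using h)

theorem smul_simplexS_eq_image_slab (v : Fin d → V) (hab : 0 < a + b) :
    (a + b) • simplexS v = Fintype.linearCombination ℝ v '' slab d a b 0 d := by
  rw [slab_zero_self, ← smul_blockSimplex_one hab, image_smul_set, ← range_id,
    ← simplexS_comp_eq_image v strictMono_id]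
  rfl

theorem image_slab_eq_translate (v : Fin d → V) (ha : 0 < a) (hb : 0 < b) (hki : k ≤ i)
    (hid : i ≤ d) :
    Fintype.linearCombination ℝ v '' slab d a b i k =
      (· + Fintype.linearCombination ℝ v fun j => if ↑j < i then b else 0) ''
        (a • simplexS (v ∘ Fin.castLE (hki.trans hid)) +
          b • simplexS (fun t : Fin (d - i) => v ⟨i + t, by omega⟩)) := by
  rw [slab_eq_add ha.le hb.le hki, image_add, image_add, image_singleton, add_singleton,
    ← smul_blockSimplex_one ha, ← smul_blockSimplex_one hb, image_smul_set, image_smul_set,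
    simplexS_castLE_eq_image, simplexS_tail_eq_image v hid]

end Coordinates

section Valuation

variable {V M : Type*} [TopologicalSpace V] [AddCommGroup V] [Module ℝ V]
  [IsTopologicalAddGroup V] [ContinuousSMul ℝ V] [AddCommGroup M]

theorem valuation_image_slab_zero (φ : Set V → M)
    (hval : ∀ B C : Set V,
      B.Nonempty → IsCompact B → Convex ℝ B →
      C.Nonempty → IsCompact C → Convex ℝ C →
      Convex ℝ (B ∪ C) →
      φ (B ∪ C) = φ B + φ C - φ (B ∩ C))
    (L : (Fin d → ℝ) →ₗ[ℝ] V) (hL : Function.Injective L) (ha : 0 ≤ a) (hb : 0 ≤ b)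
    (k : ℕ) :
    φ (L '' slab d a b 0 k) = ∑ i ∈ Finset.range (k + 1), φ (L '' slab d a b i i)
      - ∑ i ∈ Finset.range k, φ (L '' slab d a b (i + 1) i) := by
  have hbody : ∀ i k, (L '' slab d a b i k).Nonempty ∧ IsCompact (L '' slab d a b i k) ∧
      Convex ℝ (L '' slab d a b i k) := fun i k =>
    ⟨(slab_nonempty ha hb).image L,
      isCompact_slab.image (LinearMap.continuous_of_finiteDimensional L),
      convex_slab.linear_image L⟩
  induction k with
  | zero => simp
  | succ k ih =>
    obtain ⟨hne₁, hcpt₁, hconv₁⟩ := hbody 0 k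
    obtain ⟨hne₂, hcpt₂, hconv₂⟩ := hbody (k + 1) (k + 1)
    have hunion := hval _ _ hne₁ hcpt₁ hconv₁ hne₂ hcpt₂ hconv₂
      (by simpa only [image_union, slab_zero_succ] using (hbody 0 (k + 1)).2.2)
    rw [slab_zero_succ, image_union, hunion, ← image_inter hL, slab_zero_inter_slab_succ, ih,
      Finset.sum_range_succ (fun i => φ (L '' slab d a b i i)) (k + 1),
      Finset.sum_range_succ (fun i => φ (L '' slab d a b (i + 1) i)) k]
    abel

end Valuation

end CanonicalSimplex

open CanonicalSimplex

theorem stmt14 {V M : Type*} [TopologicalSpace V] [AddCommGroup V] [Module ℝ V]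
    [IsTopologicalAddGroup V] [ContinuousSMul ℝ V]
    [AddCommGroup M]
    (φ : Set V → M)
    -- φ is a valuation on convex bodies:
    (hval : ∀ B C : Set V,
      B.Nonempty → IsCompact B → Convex ℝ B →
      C.Nonempty → IsCompact C → Convex ℝ C →
      Convex ℝ (B ∪ C) →
      φ (B ∪ C) = φ B + φ C - φ (B ∩ C))
    -- φ is translation-invariant:
    (htrans : ∀ (X : Set V) (w : V), φ ((fun x => x + w) '' X) = φ X)
    {d : ℕ} (v : Fin d → V) (hv : LinearIndependent ℝ v)
    (a b : ℝ) (ha : 0 < a) (hb : 0 < b)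
    -- `σ i = S(v_1, …, v_i)`:
    (σ : Fin (d + 1) → Set V)
    (hσ : ∀ i, σ i = simplexS (fun t : Fin i.1 => v (Fin.castLE i.is_le t)))
    -- `τ i = S(v_{i+1}, …, v_d)`:
    (τ : Fin (d + 1) → Set V)
    (hτ : ∀ i, τ i = simplexS (fun t : Fin (d - i.1) => v ⟨i.1 + t.1, by omega⟩))
    -- `σm i = S(v_1, …, v_{i-1})`:
    (σm : Fin (d + 1) → Set V)
    (hσm : ∀ i, σm i = simplexS (fun t : Fin (i.1 - 1) => v ⟨t.1, by omega⟩)) :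
    φ ((a + b) • simplexS v)
      = (∑ i : Fin (d + 1), φ (a • σ i + b • τ i))
        - ∑ i ∈ Finset.univ.filter (fun i : Fin (d + 1) => 1 ≤ i.1),
            φ (a • σm i + b • τ i) := by
  set L := Fintype.linearCombination ℝ v
  have hpiece : ∀ (i : Fin (d + 1)) k (hk : k ≤ ↑i), φ (a • simplexS (v ∘ Fin.castLE
      (hk.trans i.is_le)) + b • τ i) = φ (L '' slab d a b i k) := fun i k hk => by
    rw [hτ, image_slab_eq_translate v ha hb hk i.is_le, htrans]
  have hsum₁ : ∑ i : Fin (d + 1), φ (a • σ i + b • τ i) =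
      ∑ i ∈ Finset.range (d + 1), φ (L '' slab d a b i i) := by
    rw [← Fin.sum_univ_eq_sum_range (fun i => φ (L '' slab d a b i i))]
    exact Finset.sum_congr rfl fun i _ => hσ i ▸ hpiece i i le_rfl
  have hsum₂ : ∑ i ∈ Finset.univ.filter (fun i : Fin (d + 1) => 1 ≤ i.1),
      φ (a • σm i + b • τ i) = ∑ i ∈ Finset.range d, φ (L '' slab d a b (i + 1) i) := by
    rw [← Fin.sum_univ_eq_sum_range (fun i => φ (L '' slab d a b (i + 1) i)),
      Finset.sum_filter, Fin.sum_univ_succ, if_neg (by simp), zero_add]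
    refine Finset.sum_congr rfl fun i _ => ?_
    rw [if_pos (by simp), hσm]
    exact hpiece i.succ i (by simp)
  rw [smul_simplexS_eq_image_slab v (by positivity), hsum₁, hsum₂]
  exact valuation_image_slab_zero φ hval L hv.fintypeLinearCombination_injective ha.le hb.le d
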